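/- arXiv:1404.3793 — 8 statements merged into one kernel-verified Lean document; each statement's English description precedes it below -/
import Mathlib

section
/- If J is a torsion A-module (via the A-module structure induced by f), then every element (a, f(a)+i) with a ∈ Z(A) and i ∈ J is a zero-divisor of A ⋈^f J. -/
variable {A B : Type*} [CommRing A] [CommRing B]

/-- The amalgamation `A ⋈^f J` of `A` and `B` along the ideal `J` with respect to `f`,
as a subring of `A × B`. -/
def amalg (f : A →+* B) (J : Ideal B) : Subring (A × B) where
  carrier := {p | ∃ a, ∃ j ∈ J, p = (a, f a + j)}
  zero_mem' := ⟨0, 0, J.zero_mem, by ext <;> simp⟩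
  one_mem' := ⟨1, 0, J.zero_mem, by ext <;> simp⟩
  add_mem' := by
    rintro _ _ ⟨a, j, hj, rfl⟩ ⟨a', j', hj', rfl⟩
    exact ⟨a + a', j + j', J.add_mem hj hj', by simp [Prod.ext_iff]; ring⟩
  neg_mem' := by
    rintro _ ⟨a, j, hj, rfl⟩
    exact ⟨-a, -j, J.neg_mem hj, by simp [Prod.ext_iff]; ring⟩
  mul_mem' := by
    rintro _ _ ⟨a, j, hj, rfl⟩ ⟨a', j', hj', rfl⟩
    exact ⟨a * a', f a * j' + j * f a' + j * j',
      J.add_mem (J.add_mem (J.mul_mem_left _ hj') (J.mul_mem_right _ hj)) (J.mul_mem_right _ hj),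
      by simp [Prod.ext_iff]; ring⟩

/-- The set of zero-divisors of a ring. -/
def zdSet (R : Type*) [CommRing R] : Set R := {a | ∃ b, b ≠ 0 ∧ a * b = 0}

/-- The content ideal of a polynomial: the ideal generated by its coefficients. -/
def contentIdeal {R : Type*} [CommRing R] (p : Polynomial R) : Ideal R :=
  Ideal.span (Set.range p.coeff)

/-- A polynomial is Gaussian if `c(ph) = c(p) c(h)` for every polynomial `h`. -/
def IsGaussianPoly {R : Type*} [CommRing R] (p : Polynomial R) : Prop :=
  ∀ h : Polynomial R, contentIdeal (p * h) = contentIdeal p * contentIdeal h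

/-- A Gaussian ring. -/
def IsGaussianRing (R : Type*) [CommRing R] : Prop :=
  ∀ p q : Polynomial R, contentIdeal (p * q) = contentIdeal p * contentIdeal q

/-- A Prüfer ring: every finitely generated regular ideal is invertible
(in the total ring of quotients). -/
def IsPruferRing (R : Type*) [CommRing R] : Prop :=
  ∀ I : Ideal R, I.FG → (∃ r ∈ I, r ∈ nonZeroDivisors R) →
    ∃ T : FractionalIdeal (nonZeroDivisors R) (FractionRing R),
      (I : FractionalIdeal (nonZeroDivisors R) (FractionRing R)) * T = 1

def amalgDiag (f : A →+* B) (J : Ideal B) : A →+* amalg f J :=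
  ((RingHom.id A).prod f).codRestrict (amalg f J) fun a => ⟨a, 0, J.zero_mem, by simp⟩

theorem coe_amalgDiag (f : A →+* B) (J : Ideal B) (a : A) :
    (amalgDiag f J a : A × B) = (a, f a) :=
  rfl

theorem amalgDiag_injective (f : A →+* B) (J : Ideal B) : Function.Injective (amalgDiag f J) :=
  fun _ _ h => congrArg (fun x : amalg f J => (x : A × B).1) h

theorem mul_amalgDiag_eq_zero {f : A →+* B} {J : Ideal B} {a c : A} {j : B}
    (hx : (a, f a + j) ∈ amalg f J) (hac : a * c = 0) (hjc : j * f c = 0) :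
    ⟨(a, f a + j), hx⟩ * amalgDiag f J c = 0 := by
  apply Subtype.ext
  have hfac : f a * f c = 0 := by rw [← map_mul, hac, map_zero]
  simp [Prod.ext_iff, coe_amalgDiag, hac, add_mul, hfac, hjc]

theorem zeroDivisor_amalg_of_torsion_general (f : A →+* B) (J : Ideal B)
    (htor : ∀ j ∈ J, ∃ r ∈ nonZeroDivisors A, f r * j = 0) :
    {x : ↥(amalg f J) | (x : A × B).1 ∈ zdSet A} ⊆ zdSet ↥(amalg f J) := by
  rintro ⟨_, a, j, hj, rfl⟩ ⟨b, hb, hab⟩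
  obtain ⟨r, hr, hrj⟩ := htor j hj
  -- Multiplying the annihilator `b` of `a` by `r` makes it kill `j` as well, and keeps it nonzero.
  refine ⟨amalgDiag f J (r * b), ?_, mul_amalgDiag_eq_zero _ ?_ ?_⟩
  · rw [Ne, ← map_zero (amalgDiag f J), (amalgDiag_injective f J).eq_iff]
    exact (mul_left_mem_nonZeroDivisors_eq_zero_iff hr).not.mpr hb
  · rw [mul_left_comm, hab, mul_zero]
  · rw [map_mul, ← mul_assoc, mul_comm j, hrj, zero_mul]

/-- If `J` is a torsion `A`-module, every element of `A ⋈^f J` whose first coordinate is a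
zero-divisor of `A` is a zero-divisor of `A ⋈^f J`. -/
theorem zeroDivisor_amalg_of_torsion (f : A →+* B) (J : Ideal B) (hJ : J ≠ ⊤)
    (htor : ∀ j ∈ J, ∃ r ∈ nonZeroDivisors A, f r * j = 0) :
    {x : ↥(amalg f J) | (x : A × B).1 ∈ zdSet A} ⊆ zdSet ↥(amalg f J) :=
  zeroDivisor_amalg_of_torsion_general f J htor
end

section
/- If f maps regular elements of A to regular elements of B and A ⋈^f J is a Prüfer ring, then A is a Prüfer ring. -/
variable {A B : Type*} [CommRing A] [CommRing B]

/-! A regular ideal is invertible iff it divides one (equivalently each) of its regular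
elements; this moves invertibility from `FractionRing R` back to ideals of `R`, where it can
be transported along ring homomorphisms. The Prüfer property then passes to any retract
`A` of a Prüfer ring whose section preserves regular elements, and `a ↦ (a, f a)` is such
a section of `A ⋈^f J → A`. -/

open scoped nonZeroDivisors

section Invertible

variable {R : Type*} [CommRing R]

theorem Ideal.exists_mul_eq_span_singleton_of_coeIdeal_mul_eq_one {I : Ideal R} {r : R}
    (hrI : r ∈ I) {T : FractionalIdeal R⁰ (FractionRing R)}
    (hT : (I : FractionalIdeal R⁰ (FractionRing R)) * T = 1) :
    ∃ K : Ideal R, I * K = Ideal.span {r} := by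
  have hrT : FractionalIdeal.spanSingleton R⁰ (algebraMap R (FractionRing R) r) * T ≤ 1 := by
    rw [← hT]
    exact mul_le_mul_left (FractionalIdeal.spanSingleton_le_iff_mem.mpr
      (FractionalIdeal.mem_coeIdeal_of_mem _ hrI)) T
  obtain ⟨K, hK⟩ := FractionalIdeal.le_one_iff_exists_coeIdeal.mp hrT
  refine ⟨K, FractionalIdeal.coeIdeal_injective' le_rfl (P := FractionRing R) ?_⟩
  beta_reduce
  rw [FractionalIdeal.coeIdeal_mul, hK, FractionalIdeal.coeIdeal_span_singleton,
    mul_left_comm, hT, mul_one]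

theorem Ideal.exists_coeIdeal_mul_eq_one_of_mul_eq_span_singleton {I K : Ideal R} {r : R}
    (hr : r ∈ R⁰) (hIK : I * K = Ideal.span {r}) :
    ∃ T : FractionalIdeal R⁰ (FractionRing R),
      (I : FractionalIdeal R⁰ (FractionRing R)) * T = 1 := by
  obtain ⟨u, hu⟩ : IsUnit (algebraMap R (FractionRing R) r) :=
    IsLocalization.map_units _ (⟨r, hr⟩ : R⁰)
  refine ⟨FractionalIdeal.spanSingleton _ ((u⁻¹ : (FractionRing R)ˣ) : FractionRing R) *
    (K : FractionalIdeal R⁰ (FractionRing R)), ?_⟩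
  rw [mul_left_comm, ← FractionalIdeal.coeIdeal_mul, hIK,
    FractionalIdeal.coeIdeal_span_singleton, ← hu,
    FractionalIdeal.spanSingleton_mul_spanSingleton, Units.inv_mul,
    FractionalIdeal.spanSingleton_one]

end Invertible

theorem IsPruferRing.of_retraction {R : Type*} [CommRing R] (ι : A →+* R) (π : R →+* A)
    (hπι : π.comp ι = RingHom.id A) (hι : ∀ a ∈ A⁰, ι a ∈ R⁰) (hR : IsPruferRing R) :
    IsPruferRing A := by
  rintro I hI ⟨r, hrI, hr⟩
  have hrI' : ι r ∈ I.map ι := Ideal.mem_map_of_mem ι hrI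
  obtain ⟨T, hT⟩ := hR (I.map ι) (hI.map ι) ⟨ι r, hrI', hι r hr⟩
  obtain ⟨K, hK⟩ := Ideal.exists_mul_eq_span_singleton_of_coeIdeal_mul_eq_one hrI' hT
  refine Ideal.exists_coeIdeal_mul_eq_one_of_mul_eq_span_singleton (K := K.map π) hr ?_
  have hπιr : π (ι r) = r := RingHom.congr_fun hπι r
  simpa only [Ideal.map_mul, Ideal.map_map, hπι, Ideal.map_id, Ideal.map_span,
    Set.image_singleton, hπιr] using congrArg (Ideal.map π) hK

namespace amalg

variable (f : A →+* B) (J : Ideal B)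

def diag : A →+* amalg f J :=
  (RingHom.prod (RingHom.id A) f).codRestrict (amalg f J)
    fun a => ⟨a, 0, J.zero_mem, by simp⟩

def fst : amalg f J →+* A :=
  (RingHom.fst A B).comp (amalg f J).subtype

variable {f J}

theorem diag_mem_nonZeroDivisors (hf : ∀ a ∈ A⁰, f a ∈ B⁰) {r : A} (hr : r ∈ A⁰) :
    diag f J r ∈ (amalg f J)⁰ := by
  refine mem_nonZeroDivisors_iff_right.mpr fun ⟨x, a, j, _, hx⟩ hxr => ?_
  subst hx
  have hxr' : (a * r, (f a + j) * f r) = 0 := congrArg Subtype.val hxr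
  obtain rfl : a = 0 := mem_nonZeroDivisors_iff_right.mp hr a (congrArg Prod.fst hxr')
  obtain rfl : j = 0 := mem_nonZeroDivisors_iff_right.mp (hf r hr) j
    (by simpa using congrArg Prod.snd hxr')
  ext <;> simp

end amalg

theorem prufer_of_amalg_prufer_general (f : A →+* B) (J : Ideal B)
    (hreg : ∀ a ∈ nonZeroDivisors A, f a ∈ nonZeroDivisors B)
    (h : IsPruferRing ↥(amalg f J)) : IsPruferRing A :=
  h.of_retraction (amalg.diag f J) (amalg.fst f J) rfl
    fun _ => amalg.diag_mem_nonZeroDivisors hreg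

/-- If `f` maps regular elements to regular elements and `A ⋈^f J` is Prüfer, then so is `A`. -/
theorem prufer_of_amalg_prufer (f : A →+* B) (J : Ideal B) (hJ : J ≠ ⊤)
    (hreg : ∀ a ∈ nonZeroDivisors A, f a ∈ nonZeroDivisors B)
    (h : IsPruferRing ↥(amalg f J)) : IsPruferRing A :=
  prufer_of_amalg_prufer_general f J hreg h
end

section
/- If A is a local Prüfer ring, J ⊆ Rad(B), J ⊆ f(A), f⁻¹(J) ⊆ Z(A), and f maps regular elements of A to regular elements of B, then Z(A ⋈^f J) = {(a, f(a)+j) : a ∈ Z(A), j ∈ J}. -/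
variable {A B : Type*} [CommRing A] [CommRing B]

/-
In a local ring, an invertible ideal `(a, c)` is generated by `a` or by `c`: writing
`1 = a u + c v` with `u, v` in the inverse, one of the two summands is a unit. Hence in a
local Prüfer ring a regular element `a` divides every zero-divisor `c`, say `c = a t` with `t`
a non-unit, so `a + c = a (1 + t)` is again regular. For `(a, f a + j) ∈ A ⋈^f J` with `a`
regular, write `j = f c`; then `f a + j = f (a + c)` is regular in `B`, so `(a, f a + j)` kills
nothing of the form `(0, j')`, and it kills no `(b, _)` with `b ≠ 0` either. Conversely, if
`a b = 0` with `b ≠ 0` and `j = f c`, then `(a, f a + j)` kills `(c b, 0)`, or `(b, f b)` when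
`c b = 0`.
-/

theorem mem_zdSet_iff_notMem_nonZeroDivisors {R : Type*} [CommRing R] {a : R} :
    a ∈ zdSet R ↔ a ∉ nonZeroDivisors R := by
  simp only [notMem_nonZeroDivisors_iff_left, Set.Nonempty, zdSet, Set.mem_ofPred_eq, and_comm]

theorem Subring.mem_zdSet_iff {R : Type*} [CommRing R] {S : Subring R} {x : S} :
    x ∈ zdSet S ↔ ∃ y ∈ S, y ≠ 0 ∧ (x : R) * y = 0 := by
  constructor
  · rintro ⟨y, hy, hxy⟩
    exact ⟨y, y.2, by exact_mod_cast hy, by exact_mod_cast congrArg Subtype.val hxy⟩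
  · rintro ⟨y, hyS, hy, hxy⟩
    exact ⟨⟨y, hyS⟩, by simpa [← Subtype.coe_ne_coe] using hy, Subtype.ext hxy⟩

open Submodule in
theorem dvd_or_dvd_of_span_pair_mul_eq_one {R K : Type*} [CommRing R] [IsLocalRing R]
    [CommRing K] [Algebra R K] (hinj : Function.Injective (algebraMap R K)) {a c : R}
    {T : Submodule R K} (hT : span R {algebraMap R K a, algebraMap R K c} * T = 1) :
    a ∣ c ∨ c ∣ a := by
  have integral {x} (hx : x ∈ ({algebraMap R K a, algebraMap R K c} : Set K)) {u} (hu : u ∈ T) :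
      ∃ p : R, algebraMap R K p = x * u :=
    mem_one.mp (hT ▸ mul_mem_mul (subset_span hx) hu)
  have one_mem : (1 : K) ∈ span R {algebraMap R K a} * T ⊔ span R {algebraMap R K c} * T := by
    rw [← Submodule.sup_mul, ← span_insert, hT]
    exact one_le.mp le_rfl
  obtain ⟨_, hy, _, hz, huv⟩ := mem_sup.mp one_mem
  obtain ⟨u, hu, rfl⟩ := mem_span_singleton_mul.mp hy
  obtain ⟨v, hv, rfl⟩ := mem_span_singleton_mul.mp hz
  obtain ⟨p, hp⟩ := integral (.inl rfl) hu
  obtain ⟨q, hq⟩ := integral (.inr rfl) hu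
  obtain ⟨r, hr⟩ := integral (.inr rfl) hv
  obtain ⟨s, hs⟩ := integral (.inl rfl) hv
  have hpr : IsUnit (p + r) := by
    rw [show p + r = 1 from hinj (by simp [hp, hr, huv])]
    exact isUnit_one
  rcases IsLocalRing.isUnit_or_isUnit_of_isUnit_add hpr with hp_unit | hr_unit
  · refine .inl (hp_unit.dvd_mul_right.mp ⟨q, hinj ?_⟩)
    simp only [map_mul, hp, hq]
    ring
  · refine .inr (hr_unit.dvd_mul_right.mp ⟨s, hinj ?_⟩)
    simp only [map_mul, hr, hs]
    ring

theorem IsPruferRing.dvd_or_dvd {R : Type*} [CommRing R] [IsLocalRing R] (hP : IsPruferRing R)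
    {a : R} (ha : a ∈ nonZeroDivisors R) (c : R) : a ∣ c ∨ c ∣ a := by
  obtain ⟨T, hT⟩ := hP (Ideal.span {a, c}) (Submodule.fg_span (Set.toFinite _))
    ⟨a, Ideal.subset_span (Set.mem_insert a _), ha⟩
  refine dvd_or_dvd_of_span_pair_mul_eq_one (IsFractionRing.injective R (FractionRing R))
    (T := T) ?_
  have := congrArg ((↑) : FractionalIdeal _ _ → Submodule R (FractionRing R)) hT
  rwa [FractionalIdeal.coe_mul, FractionalIdeal.coe_one, FractionalIdeal.coe_coeIdeal,
    IsLocalization.coeSubmodule_span, Set.image_pair] at this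

theorem IsPruferRing.add_mem_nonZeroDivisors {R : Type*} [CommRing R] [IsLocalRing R]
    (hP : IsPruferRing R) {a c : R} (ha : a ∈ nonZeroDivisors R) (hc : c ∈ zdSet R) :
    a + c ∈ nonZeroDivisors R := by
  rw [mem_zdSet_iff_notMem_nonZeroDivisors] at hc
  obtain ⟨t, rfl⟩ : a ∣ c := (hP.dvd_or_dvd ha c).resolve_right fun ⟨s, hs⟩ ↦
    hc (mul_mem_nonZeroDivisors.mp (hs ▸ ha)).1
  have ht : t ∈ nonunits R := fun ht ↦
    hc (mul_mem_nonZeroDivisors.mpr ⟨ha, ht.mem_nonZeroDivisors⟩)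
  have h1t : IsUnit (1 + t) := by
    simpa using IsLocalRing.isUnit_one_sub_self_of_mem_nonunits (-t) (by simpa using ht)
  rw [show a + a * t = a * (1 + t) by ring]
  exact mul_mem_nonZeroDivisors.mpr ⟨ha, h1t.mem_nonZeroDivisors⟩

section Amalgamation

variable {f : A →+* B} {J : Ideal B}

theorem map_add_mem_nonZeroDivisors [IsLocalRing A] (hP : IsPruferRing A)
    (hJf : (J : Set B) ⊆ Set.range f) (hpre : f ⁻¹' (J : Set B) ⊆ zdSet A)
    (hreg : ∀ a ∈ nonZeroDivisors A, f a ∈ nonZeroDivisors B)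
    {a : A} (ha : a ∈ nonZeroDivisors A) {j : B} (hj : j ∈ J) :
    f a + j ∈ nonZeroDivisors B := by
  obtain ⟨c, rfl⟩ := hJf hj
  simpa using hreg _ (hP.add_mem_nonZeroDivisors ha (hpre hj))

theorem fst_mem_zdSet_of_mem_zdSet_amalg [IsLocalRing A] (hP : IsPruferRing A)
    (hJf : (J : Set B) ⊆ Set.range f) (hpre : f ⁻¹' (J : Set B) ⊆ zdSet A)
    (hreg : ∀ a ∈ nonZeroDivisors A, f a ∈ nonZeroDivisors B)
    {x : amalg f J} (hx : x ∈ zdSet (amalg f J)) : (x : A × B).1 ∈ zdSet A := by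
  obtain ⟨a, j, hj, hxa⟩ := x.2
  obtain ⟨_, ⟨b, j', hj', rfl⟩, hy, hxy⟩ := Subring.mem_zdSet_iff.mp hx
  rw [hxa, Prod.mk_mul_mk, Prod.mk_eq_zero] at hxy
  rw [hxa, mem_zdSet_iff_notMem_nonZeroDivisors]
  intro ha
  obtain rfl : b = 0 := (mul_left_mem_nonZeroDivisors_eq_zero_iff ha).mp hxy.1
  have hfa := map_add_mem_nonZeroDivisors hP hJf hpre hreg ha hj
  obtain rfl : j' = 0 := by
    simpa using (mul_left_mem_nonZeroDivisors_eq_zero_iff hfa).mp hxy.2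
  exact hy (by simp)

theorem mem_zdSet_amalg_of_fst_mem_zdSet (hJf : (J : Set B) ⊆ Set.range f)
    {x : amalg f J} (hx : (x : A × B).1 ∈ zdSet A) : x ∈ zdSet (amalg f J) := by
  obtain ⟨a, j, hj, hxa⟩ := x.2
  obtain ⟨c, rfl⟩ := hJf hj
  rw [hxa] at hx
  obtain ⟨b, hb, hab⟩ := hx
  rw [Subring.mem_zdSet_iff, hxa]
  by_cases hcb : c * b = 0
  · refine ⟨(b, f b), ⟨b, 0, J.zero_mem, by simp⟩, by simp [hb], ?_⟩
    simp [← map_add, ← map_mul, add_mul, hab, hcb]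
  · have hfcb : f (c * b) ∈ J := by simpa using J.mul_mem_right (f b) hj
    refine ⟨(c * b, 0), ⟨c * b, -f (c * b), J.neg_mem hfcb, by simp⟩, by simp [hcb], ?_⟩
    simp [mul_left_comm a c b, hab]

end Amalgamation

theorem zeroDivisors_amalg_eq_general (f : A →+* B) (J : Ideal B) [IsLocalRing A]
    (hP : IsPruferRing A)
    (hJf : (J : Set B) ⊆ Set.range f) (hpre : f ⁻¹' (J : Set B) ⊆ zdSet A)
    (hreg : ∀ a ∈ nonZeroDivisors A, f a ∈ nonZeroDivisors B) :
    zdSet ↥(amalg f J) = {x : ↥(amalg f J) | (x : A × B).1 ∈ zdSet A} :=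
  Set.ext fun _ ↦ ⟨fst_mem_zdSet_of_mem_zdSet_amalg hP hJf hpre hreg,
    mem_zdSet_amalg_of_fst_mem_zdSet hJf⟩

/-- Lemma 2.6: description of the zero-divisors of `A ⋈^f J` when `A` is local Prüfer. -/
theorem zeroDivisors_amalg_eq (f : A →+* B) (J : Ideal B) [IsLocalRing A]
    (hP : IsPruferRing A) (hJ : J ≠ ⊤) (hrad : J ≤ (⊥ : Ideal B).jacobson)
    (hJf : (J : Set B) ⊆ Set.range f) (hpre : f ⁻¹' (J : Set B) ⊆ zdSet A)
    (hreg : ∀ a ∈ nonZeroDivisors A, f a ∈ nonZeroDivisors B) :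
    zdSet ↥(amalg f J) = {x : ↥(amalg f J) | (x : A × B).1 ∈ zdSet A} :=
  zeroDivisors_amalg_eq_general f J hP hJf hpre hreg
end

section
/- Let (A,m) be local, J ⊆ Rad(B), J ⊆ f(A), and f(Reg(A)) = Reg(B). Then A ⋈^f J is a Prüfer ring if and only if A is a Prüfer ring and J = f(a)J for every a ∈ m \ Z(A). -/
variable {A B : Type*} [CommRing A] [CommRing B]

/-!
Both rings are local (`J` lies in the Jacobson radical), and in a local ring a finitely generated
regular ideal is invertible iff it is principal. `A` is a retract of `A ⋈^f J` through
`a ↦ (a, f a)` and the first projection, which carries principality down to `A`.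

If `A ⋈^f J` is Prüfer, `a` is regular and `j ∈ J`, the ideal generated by `(a, f a)` and `(0, j)`
is principal with a regular generator; locality forces it to be generated by `(a, f a)`, and
comparing components gives `j ∈ f(a) J`.

Conversely, let `I` be a finitely generated regular ideal of `A ⋈^f J` whose projection to `A`
is `(α)`, and pick `x ∈ I` over `α`. Since `J = f(α) J` (trivially so if `α` is a unit),
`x = (α, f(α)(1 + β))` with `β ∈ J`, so `1 + β` is a unit. An element of `I` minus a multiple of
`x` has the form `(0, f(α) γ)`, which is `(0, (1 + β)⁻¹ γ) · x`. Hence `I = (x)`.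
-/

open scoped nonZeroDivisors

def IsRegularBezout (R : Type*) [CommRing R] : Prop :=
  ∀ I : Ideal R, I.FG → (∃ r ∈ I, r ∈ R⁰) → I.IsPrincipal

section

variable {R : Type*} [CommRing R]

theorem mem_nonZeroDivisors_of_mem_span_singleton {r g : R}
    (hr : r ∈ R⁰) (hrg : r ∈ Ideal.span {g}) : g ∈ R⁰ := by
  obtain ⟨c, rfl⟩ := Ideal.mem_span_singleton'.mp hrg
  exact (mul_mem_nonZeroDivisors.mp hr).2

theorem notMem_zdSet_iff {a : R} : a ∉ zdSet R ↔ a ∈ R⁰ := by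
  simp [zdSet, mem_nonZeroDivisors_iff_right, mul_comm a, not_imp_not]

theorem isPruferRing_iff_isRegularBezout_of_finite_maximals
    (hR : {I : Ideal R | I.IsMaximal}.Finite) : IsPruferRing R ↔ IsRegularBezout R := by
  refine forall₃_congr fun I _ hreg => ⟨fun ⟨T, hT⟩ => ?_, fun ⟨g, hg⟩ => ?_⟩
  · exact Ideal.IsPrincipal.of_finite_maximals_of_isUnit hR (.of_mul_eq_one T hT)
  · obtain ⟨r, hrI, hr⟩ := hreg
    rw [hg] at hrI ⊢
    have hu := IsLocalization.map_units (FractionRing R)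
      ⟨g, mem_nonZeroDivisors_of_mem_span_singleton hr hrI⟩
    refine ⟨FractionalIdeal.spanSingleton R⁰ ↑hu.unit⁻¹, ?_⟩
    rw [Ideal.submodule_span_eq, FractionalIdeal.coeIdeal_span_singleton,
      FractionalIdeal.spanSingleton_mul_spanSingleton, IsUnit.mul_val_inv,
      FractionalIdeal.spanSingleton_one]

theorem IsLocalRing.isPruferRing_iff_isRegularBezout [IsLocalRing R] :
    IsPruferRing R ↔ IsRegularBezout R :=
  isPruferRing_iff_isRegularBezout_of_finite_maximals
    (Set.subsingleton_of_forall_eq _ fun _ => IsLocalRing.eq_maximalIdeal).finite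

theorem IsLocalRing.mem_span_singleton_or_of_span_pair_eq
    [IsLocalRing R] {x y g : R} (hg : g ∈ R⁰) (h : Ideal.span {x, y} = Ideal.span {g}) :
    y ∈ Ideal.span {x} ∨ x ∈ Ideal.span {y} := by
  obtain ⟨u, v, hg_eq⟩ := Ideal.mem_span_pair.mp (h ▸ Ideal.mem_span_singleton_self g)
  obtain ⟨s, rfl⟩ := Ideal.mem_span_singleton'.mp (h ▸ Ideal.subset_span (by simp) : x ∈ _)
  obtain ⟨t, rfl⟩ := Ideal.mem_span_singleton'.mp (h ▸ Ideal.subset_span (by simp) : y ∈ _)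
  have hsum : u * s + v * t = 1 := by
    linear_combination mem_nonZeroDivisors_iff_right.mp hg (u * s + v * t - 1)
      (by linear_combination hg_eq)
  refine (IsLocalRing.isUnit_or_isUnit_of_add_one hsum).imp (fun hus => ?_) fun hvt => ?_
  · rw [Ideal.span_singleton_mul_left_unit (isUnit_of_mul_isUnit_right hus)]
    exact Ideal.mul_mem_left _ t (Ideal.mem_span_singleton_self g)
  · rw [Ideal.span_singleton_mul_left_unit (isUnit_of_mul_isUnit_right hvt)]
    exact Ideal.mul_mem_left _ s (Ideal.mem_span_singleton_self g)

theorem isUnit_add_of_mem_jacobson_bot {u j : R} (hu : IsUnit u)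
    (hj : j ∈ (⊥ : Ideal R).jacobson) : IsUnit (u + j) := by
  obtain ⟨u', hu'⟩ := hu.exists_right_inv
  convert (Ideal.mem_jacobson_bot.mp hj u').mul hu using 1
  linear_combination -j * hu'

end

theorem IsRegularBezout.of_retract {R S : Type*} [CommRing R] [CommRing S] (φ : R →+* S)
    (ψ : S →+* R) (hφψ : φ.comp ψ = RingHom.id S) (hψ : S⁰ ≤ R⁰.comap ψ)
    (h : IsRegularBezout R) : IsRegularBezout S := by
  rintro I hI ⟨r, hrI, hr⟩
  have hI_eq : I = (I.map ψ).map φ := by rw [Ideal.map_map, hφψ, Ideal.map_id]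
  rw [hI_eq]
  exact (h _ (hI.map ψ) ⟨ψ r, Ideal.mem_map_of_mem ψ hrI, hψ hr⟩).map_ringHom φ

namespace amalg

variable (f : A →+* B) (J : Ideal B)

theorem mem_iff {x : A × B} : x ∈ amalg f J ↔ x.2 - f x.1 ∈ J :=
  ⟨fun ⟨a, j, hj, hx⟩ => by simpa [hx], fun h => ⟨x.1, _, h, by simp⟩⟩

def incl : A →+* amalg f J :=
  (RingHom.prod (RingHom.id A) f).codRestrict _ fun a => (mem_iff f J).mpr (by simp)

@[simp] theorem coe_incl (a : A) : (incl f J a : A × B) = (a, f a) := rfl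

theorem fst_comp_incl : (fst f J).comp (incl f J) = RingHom.id A := rfl

theorem fst_surjective : Function.Surjective (fst f J) := fun a => ⟨incl f J a, rfl⟩

variable {f J}

theorem mk_zero_mem {j : B} (hj : j ∈ J) : ((0, j) : A × B) ∈ amalg f J :=
  (mem_iff f J).mpr (by simpa using hj)

theorem isUnit_of_isUnit_fst (hrad : J ≤ (⊥ : Ideal B).jacobson) {x : amalg f J}
    (hx : IsUnit x.1.1) : IsUnit x := by
  obtain ⟨⟨a, b⟩, hab⟩ := x
  have hj : b - f a ∈ J := (mem_iff f J).mp hab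
  have hb : IsUnit b := by
    simpa using isUnit_add_of_mem_jacobson_bot (hx.map f) (hrad hj)
  obtain ⟨a', ha'⟩ := hx.exists_right_inv
  obtain ⟨b', hb'⟩ := hb.exists_right_inv
  have hfa : f a * f a' = 1 := by rw [← map_mul, ha', map_one]
  have hmem : ((a', b') : A × B) ∈ amalg f J := by
    rw [mem_iff, show b' - f a' = -(b' * f a') * (b - f a) by
      linear_combination f a' * hb' - b' * hfa]
    exact J.mul_mem_left _ hj
  exact .of_mul_eq_one ⟨_, hmem⟩ (Subtype.ext (Prod.ext ha' hb'))

theorem isLocalRing [IsLocalRing A] (hrad : J ≤ (⊥ : Ideal B).jacobson) :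
    IsLocalRing (amalg f J) :=
  have : Nontrivial (amalg f J) := (fst f J).domain_nontrivial
  .of_isUnit_or_isUnit_one_sub_self fun x =>
    (IsLocalRing.isUnit_or_isUnit_one_sub_self x.1.1).imp (isUnit_of_isUnit_fst hrad)
      (isUnit_of_isUnit_fst hrad)

theorem incl_mem_nonZeroDivisors (hf : A⁰ ≤ B⁰.comap f) {a : A} (ha : a ∈ A⁰) :
    incl f J a ∈ (amalg f J)⁰ := by
  refine mem_nonZeroDivisors_iff_right.mpr fun z hz => Subtype.ext (Prod.ext ?_ ?_)
  · exact mem_nonZeroDivisors_iff_right.mp ha _ (congrArg (fun t : amalg f J => t.1.1) hz)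
  · exact mem_nonZeroDivisors_iff_right.mp (hf ha) _ (congrArg (fun t : amalg f J => t.1.2) hz)

theorem fst_mem_nonZeroDivisors (hJf : (J : Set B) ⊆ Set.range f) {x : amalg f J}
    (hx : x ∈ (amalg f J)⁰) : x.1.1 ∈ A⁰ := by
  obtain ⟨⟨a, b⟩, hab⟩ := x
  obtain ⟨c, hc⟩ := hJf ((mem_iff f J).mp hab)
  refine mem_nonZeroDivisors_iff_right.mpr fun z (hz : z * a = 0) => ?_
  -- As `b = f a + f c`, first `(z c, 0)` and then `(z, f z)` annihilate `(a, b)`.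
  have hzc : z * c = 0 := by
    have hmem : ((z * c, 0) : A × B) ∈ amalg f J := by
      simpa [mem_iff, hc] using J.mul_mem_left (f z) ((mem_iff f J).mp hab)
    have := mem_nonZeroDivisors_iff_right.mp hx ⟨_, hmem⟩
      (Subtype.ext (Prod.ext (show z * c * a = 0 by linear_combination c * hz) (zero_mul b)))
    exact congrArg (fun t : amalg f J => t.1.1) this
  have hb : b = f a + f c := by rw [hc]; ring
  have := mem_nonZeroDivisors_iff_right.mp hx (incl f J z) (Subtype.ext (Prod.ext hz
    (by simp [hb, mul_add, ← map_mul, hz, hzc])))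
  exact congrArg (fun t : amalg f J => t.1.1) this

theorem eq_span_singleton_mul_of_isRegularBezout [IsLocalRing A]
    (hrad : J ≤ (⊥ : Ideal B).jacobson) (hf : A⁰ ≤ B⁰.comap f)
    (h : IsRegularBezout (amalg f J)) {a : A} (ha : a ∈ A⁰) :
    J = Ideal.span {f a} * J := by
  have := isLocalRing (f := f) hrad
  refine le_antisymm (fun j hj => ?_) Ideal.mul_le_right
  set z : amalg f J := ⟨(0, j), mk_zero_mem hj⟩
  have hreg := incl_mem_nonZeroDivisors (J := J) hf ha
  obtain ⟨g, hg⟩ := (h (Ideal.span {incl f J a, z}) (Submodule.fg_span (Set.toFinite _))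
    ⟨_, Ideal.subset_span (by simp), hreg⟩).principal
  have hg_reg : g ∈ (amalg f J)⁰ :=
    mem_nonZeroDivisors_of_mem_span_singleton hreg (hg.le (Ideal.subset_span (by simp)))
  rcases IsLocalRing.mem_span_singleton_or_of_span_pair_eq hg_reg hg with hz | ha_mem
  · obtain ⟨c, hc⟩ := Ideal.mem_span_singleton'.mp hz
    have hc₁ : c.1.1 = 0 :=
      mem_nonZeroDivisors_iff_right.mp ha _ (congrArg (fun t : amalg f J => t.1.1) hc)
    have hc₂ : c.1.2 ∈ J := by simpa [hc₁] using (mem_iff f J).mp c.2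
    exact Ideal.mem_span_singleton_mul.mpr
      ⟨c.1.2, hc₂, by simpa [mul_comm] using congrArg (fun t : amalg f J => t.1.2) hc⟩
  · obtain ⟨c, hc⟩ := Ideal.mem_span_singleton'.mp ha_mem
    exact absurd (by simpa [z] using (congrArg (fun t : amalg f J => t.1.1) hc).symm)
      (nonZeroDivisors.ne_zero ha)

theorem mem_span_singleton_of_fst_mem (hrad : J ≤ (⊥ : Ideal B).jacobson) {x y : amalg f J}
    (hx : J = Ideal.span {f x.1.1} * J) (hy : y.1.1 ∈ Ideal.span {x.1.1}) :
    y ∈ Ideal.span {x} := by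
  obtain ⟨s, hs⟩ := Ideal.mem_span_singleton'.mp hy
  obtain ⟨β, hβ, hβ_eq⟩ := Ideal.mem_span_singleton_mul.mp (hx.le ((mem_iff f J).mp x.2))
  obtain ⟨u, hu⟩ := (isUnit_add_of_mem_jacobson_bot isUnit_one (hrad hβ)).exists_left_inv
  have hk : (y - incl f J s * x).1.2 ∈ J := by
    simpa [← hs] using (mem_iff f J).mp (y - incl f J s * x).2
  obtain ⟨γ, hγ, hγ_eq⟩ := Ideal.mem_span_singleton_mul.mp (hx.le hk)
  refine Ideal.mem_span_singleton'.mpr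
    ⟨incl f J s + ⟨(0, u * γ), mk_zero_mem (J.mul_mem_left u hγ)⟩,
      Subtype.ext (Prod.ext ?_ ?_)⟩
  · simpa using hs
  · simp at hγ_eq ⊢
    linear_combination hγ_eq + γ * f x.1.1 * hu - u * γ * hβ_eq

theorem isRegularBezout (hrad : J ≤ (⊥ : Ideal B).jacobson) (hJf : (J : Set B) ⊆ Set.range f)
    (hA : IsRegularBezout A) (hJ : ∀ a ∈ A⁰, J = Ideal.span {f a} * J) :
    IsRegularBezout (amalg f J) := by
  rintro I hI ⟨r, hrI, hr⟩
  have hr₁ := fst_mem_nonZeroDivisors hJf hr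
  obtain ⟨α, hα⟩ := (hA (I.map (fst f J)) (hI.map _)
    ⟨r.1.1, Ideal.mem_map_of_mem _ hrI, hr₁⟩).principal
  obtain ⟨x, hxI, rfl⟩ := (Ideal.mem_map_iff_of_surjective _ (fst_surjective f J)).mp
    (hα.ge (Submodule.mem_span_singleton_self α))
  have hx : x.1.1 ∈ A⁰ :=
    mem_nonZeroDivisors_of_mem_span_singleton hr₁ (hα.le (Ideal.mem_map_of_mem _ hrI))
  refine ⟨x, le_antisymm (fun y hy => ?_) ((Ideal.span_singleton_le_iff_mem _).mpr hxI)⟩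
  exact mem_span_singleton_of_fst_mem hrad (hJ _ hx) (hα.le (Ideal.mem_map_of_mem _ hy))

end amalg

open amalg in
theorem amalg_prufer_iff_general (f : A →+* B) (J : Ideal B) [IsLocalRing A]
    (hrad : J ≤ (⊥ : Ideal B).jacobson)
    (hJf : (J : Set B) ⊆ Set.range f)
    (hreg : f '' (nonZeroDivisors A : Set A) = (nonZeroDivisors B : Set B)) :
    IsPruferRing ↥(amalg f J) ↔
      IsPruferRing A ∧
        ∀ a ∈ IsLocalRing.maximalIdeal A, a ∉ zdSet A → J = Ideal.span {f a} * J := by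
  have := isLocalRing (f := f) hrad
  have hf : A⁰ ≤ B⁰.comap f := fun a ha => hreg.le (Set.mem_image_of_mem f ha)
  rw [IsLocalRing.isPruferRing_iff_isRegularBezout, IsLocalRing.isPruferRing_iff_isRegularBezout]
  refine ⟨fun h => ⟨?_, fun a _ ha => ?_⟩,
    fun ⟨hA, hJ⟩ => isRegularBezout hrad hJf hA fun a ha => ?_⟩
  · exact h.of_retract (fst f J) (incl f J) (fst_comp_incl f J)
      fun _ => incl_mem_nonZeroDivisors hf
  · exact eq_span_singleton_mul_of_isRegularBezout hrad hf h (notMem_zdSet_iff.mp ha)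
  · by_cases hu : IsUnit a
    · rw [Ideal.span_singleton_eq_top.mpr (hu.map f), Ideal.top_mul]
    · exact hJ a ((IsLocalRing.mem_maximalIdeal a).mpr hu) (notMem_zdSet_iff.mpr ha)

/-- Main theorem: transfer of the Prüfer property to `A ⋈^f J`. -/
theorem amalg_prufer_iff (f : A →+* B) (J : Ideal B) [IsLocalRing A]
    (hJ : J ≠ ⊤) (hrad : J ≤ (⊥ : Ideal B).jacobson)
    (hJf : (J : Set B) ⊆ Set.range f)
    (hreg : f '' (nonZeroDivisors A : Set A) = (nonZeroDivisors B : Set B)) :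
    IsPruferRing ↥(amalg f J) ↔
      IsPruferRing A ∧
        ∀ a ∈ IsLocalRing.maximalIdeal A, a ∉ zdSet A → J = Ideal.span {f a} * J :=
  amalg_prufer_iff_general f J hrad hJf hreg
end

section
/- Under the hypotheses that (A,m) is local, J ⊆ Rad(B), J ⊆ f(A), and f(Reg(A)) = Reg(B), if A ⋈^f J is a Prüfer ring then J ⊆ Z(B). -/
variable {A B : Type*} [CommRing A] [CommRing B]

/-! If some `j ∈ J` were regular, it would lift to a regular `a ∈ A` with `f a = j`, giving the
regular element `x = (a, j)` and the element `y = (0, j)` of `A ⋈^f J`. Since `J ⊆ Rad(B)`,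
`A ⋈^f J` is local, and in a local ring an invertible ideal is principal, so the invertible ideal
`(x, y)` forces `x ∣ y` or `y ∣ x`. The latter gives `a = 0`; the former gives `(0, j) = (a, j) r`
with `r = (0, 1)`, so `1 ∈ J`. -/

open scoped nonZeroDivisors

theorem IsUnit.add_of_mem_jacobson_bot {R : Type*} [CommRing R] {u j : R} (hu : IsUnit u)
    (hj : j ∈ (⊥ : Ideal R).jacobson) : IsUnit (u + j) := by
  obtain ⟨u, rfl⟩ := hu
  convert (Ideal.mem_jacobson_bot.mp hj ↑u⁻¹).mul u.isUnit using 1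
  simp [add_mul, mul_assoc, add_comm]

theorem IsLocalRing.dvd_or_dvd_of_span_pair_isPrincipal {R : Type*} [CommRing R] [IsLocalRing R]
    {x y : R} (h : (Ideal.span {x, y}).IsPrincipal) : x ∣ y ∨ y ∣ x := by
  obtain ⟨g, hg⟩ := h
  have hmem : ∀ z ∈ ({x, y} : Set R), ∃ c, c * g = z := fun z hz ↦
    Ideal.mem_span_singleton'.mp (hg ▸ Ideal.subset_span hz : z ∈ Submodule.span R {g})
  obtain ⟨s, rfl⟩ := hmem x (by simp)
  obtain ⟨t, rfl⟩ := hmem y (by simp)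
  obtain ⟨α, β, hαβ⟩ := Ideal.mem_span_pair.mp
    (hg ▸ Submodule.mem_span_singleton_self g : g ∈ Ideal.span {s * g, t * g})
  rcases isUnit_or_isUnit_one_sub_self (α * s + β * t) with hunit | hunit
  · rcases isUnit_or_isUnit_of_isUnit_add hunit with hs | ht
    · exact .inl (mul_dvd_mul_right (isUnit_of_mul_isUnit_right hs).dvd g)
    · exact .inr (mul_dvd_mul_right (isUnit_of_mul_isUnit_right ht).dvd g)
  · have hg0 : g = 0 := hunit.mul_right_eq_zero.mp (by linear_combination -hαβ)
    simp [hg0]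

theorem IsPruferRing.dvd_or_dvd_s11 {R : Type*} [CommRing R] [IsLocalRing R] (h : IsPruferRing R)
    {x : R} (hx : x ∈ R⁰) (y : R) : x ∣ y ∨ y ∣ x := by
  obtain ⟨T, hT⟩ := h (Ideal.span {x, y}) (Submodule.fg_span (by simp))
    ⟨x, Ideal.subset_span (by simp), hx⟩
  refine IsLocalRing.dvd_or_dvd_of_span_pair_isPrincipal
    (Ideal.IsPrincipal.of_finite_maximals_of_isUnit ?_ (IsUnit.of_mul_eq_one _ hT))
  exact (Set.finite_singleton _).subset fun _ ↦ IsLocalRing.eq_maximalIdeal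

section Amalgamation

variable (f : A →+* B) (J : Ideal B)

theorem mem_amalg_iff {p : A × B} : p ∈ amalg f J ↔ p.2 - f p.1 ∈ J := by
  refine ⟨?_, fun h ↦ ⟨p.1, _, h, by simp⟩⟩
  rintro ⟨a, j, hj, rfl⟩
  simpa using hj

theorem mem_amalg_of_mul_eq_one {p q : A × B} (hp : p ∈ amalg f J) (hpq : p * q = 1) :
    q ∈ amalg f J := by
  have hfst : f p.1 * f q.1 = 1 := by
    rw [← map_mul, show p.1 * q.1 = 1 from congrArg Prod.fst hpq, map_one]
  have hsnd : p.2 * q.2 = 1 := congrArg Prod.snd hpq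
  rw [mem_amalg_iff] at hp ⊢
  have : q.2 - f q.1 = -(q.2 * f q.1 * (p.2 - f p.1)) := by
    linear_combination (f q.1) * hsnd - q.2 * hfst
  rw [this]
  exact J.neg_mem (J.mul_mem_left _ hp)

theorem isUnit_amalg_of_isUnit_fst (hJ : J ≤ (⊥ : Ideal B).jacobson) {r : amalg f J}
    (hr : IsUnit (r : A × B).1) : IsUnit r := by
  have hsnd : IsUnit (r : A × B).2 := by
    have := (hr.map f).add_of_mem_jacobson_bot (hJ ((mem_amalg_iff f J).mp r.2))
    rwa [add_sub_cancel] at this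
  obtain ⟨q, hq⟩ := (Prod.isUnit_iff.mpr ⟨hr, hsnd⟩).exists_right_inv
  exact IsUnit.of_mul_eq_one ⟨q, mem_amalg_of_mul_eq_one f J r.2 hq⟩ (Subtype.ext hq)

theorem isLocalRing_amalg [IsLocalRing A] (hJ : J ≤ (⊥ : Ideal B).jacobson) :
    IsLocalRing (amalg f J) :=
  have : IsLocalHom ((RingHom.fst A B).comp (amalg f J).subtype) :=
    ⟨fun _ ↦ isUnit_amalg_of_isUnit_fst f J hJ⟩
  RingHom.domain_isLocalRing ((RingHom.fst A B).comp (amalg f J).subtype)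

end Amalgamation

theorem mem_nonZeroDivisors_of_notMem_zdSet {R : Type*} [CommRing R] {a : R} (ha : a ∉ zdSet R) :
    a ∈ R⁰ :=
  mem_nonZeroDivisors_iff_right.mpr fun z hz ↦ by_contra fun hz0 ↦ ha ⟨z, hz0, mul_comm a z ▸ hz⟩

theorem Prod.mk_mem_nonZeroDivisors {a : A} {b : B} (ha : a ∈ A⁰) (hb : b ∈ B⁰) :
    (a, b) ∈ (A × B)⁰ := by
  simpa only [← isRegular_iff_mem_nonZeroDivisors, Prod.isRegular_mk] using And.intro ha hb

theorem subset_zeroDivisors_of_amalg_prufer_general (f : A →+* B) (J : Ideal B) [IsLocalRing A]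
    (hJ : J ≠ ⊤) (hrad : J ≤ (⊥ : Ideal B).jacobson)
    (hreg : f '' (nonZeroDivisors A : Set A) = (nonZeroDivisors B : Set B))
    (h : IsPruferRing ↥(amalg f J)) :
    (J : Set B) ⊆ zdSet B := by
  intro j hjJ
  by_contra hjz
  have hj := mem_nonZeroDivisors_of_notMem_zdSet hjz
  obtain ⟨a, ha, rfl⟩ : j ∈ f '' (A⁰ : Set A) := hreg ▸ hj
  have := isLocalRing_amalg f J hrad
  let x : amalg f J := ⟨(a, f a), (mem_amalg_iff f J).mpr (by simp)⟩
  let y : amalg f J := ⟨(0, f a), (mem_amalg_iff f J).mpr (by simpa using hjJ)⟩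
  have hx : x ∈ (amalg f J)⁰ := mem_nonZeroDivisors_of_injective (f := (amalg f J).subtype)
    Subtype.val_injective (Prod.mk_mem_nonZeroDivisors ha hj)
  rcases h.dvd_or_dvd_s11 hx y with ⟨r, hr⟩ | ⟨r, hr⟩
  · have hr1 : (r : A × B).1 = 0 := mul_left_mem_nonZeroDivisors_eq_zero_iff ha |>.mp
      (congrArg (·.1.1) hr).symm
    have hr2 : (r : A × B).2 = 1 := by
      have hsnd : f a = f a * (r : A × B).2 := congrArg (·.1.2) hr
      exact sub_eq_zero.mp <| mul_left_mem_nonZeroDivisors_eq_zero_iff hj |>.mp <| by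
        linear_combination -hsnd
    apply hJ
    simpa [Ideal.eq_top_iff_one, hr1, hr2] using (mem_amalg_iff f J).mp r.2
  · have ha0 : a = 0 := by simpa [x, y] using congrArg (·.1.1) hr
    exact zero_notMem_nonZeroDivisors (ha0 ▸ ha)

/-- If `A ⋈^f J` is Prüfer (under the hypotheses of the main theorem), then `J ⊆ Z(B)`. -/
theorem subset_zeroDivisors_of_amalg_prufer (f : A →+* B) (J : Ideal B) [IsLocalRing A]
    (hJ : J ≠ ⊤) (hrad : J ≤ (⊥ : Ideal B).jacobson)
    (hJf : (J : Set B) ⊆ Set.range f)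
    (hreg : f '' (nonZeroDivisors A : Set A) = (nonZeroDivisors B : Set B))
    (h : IsPruferRing ↥(amalg f J)) :
    (J : Set B) ⊆ zdSet B :=
  subset_zeroDivisors_of_amalg_prufer_general f J hJ hrad hreg h
end

section
/- If A is a local Prüfer ring, a ∈ A is regular and x ∈ A is such that the ideal (a, x) is regular, then (a) and (x) are comparable; in particular if x is a non-unit multiple of a relation holds x = ak with k non-unit, and then a + x = (1+k)a is regular. -/
variable {A B : Type*} [CommRing A] [CommRing B]

/-! If `(a, x) T = 1`, then `1 = a t + x s` with `t, s ∈ T` and `a t, x s ∈ A`. In a local ring one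
of the two summands, say `a t`, is a unit, and then `x = a (x t) (a t)⁻¹` with `x t ∈ A`. -/

namespace FractionalIdeal

variable {R P : Type*} [CommRing R] [CommRing P] [Algebra R P] {S : Submonoid R}
  [IsLocalization S P]

theorem exists_add_eq_of_mem_coeIdeal_span_pair_mul {a x : R} {T : FractionalIdeal S P} {y : P}
    (hy : y ∈ (Ideal.span {a, x} : FractionalIdeal S P) * T) :
    ∃ t ∈ T, ∃ s ∈ T, algebraMap R P a * t + algebraMap R P x * s = y := by
  rw [Ideal.span_insert, coeIdeal_sup, coeIdeal_span_singleton, coeIdeal_span_singleton, add_mul,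
    mem_add] at hy
  obtain ⟨_, hat, _, hxs, rfl⟩ := hy
  obtain ⟨t, ht, rfl⟩ := mem_singleton_mul.mp hat
  obtain ⟨s, hs, rfl⟩ := mem_singleton_mul.mp hxs
  exact ⟨t, ht, s, hs, rfl⟩

end FractionalIdeal

section Comparable

open FractionalIdeal

variable {R K : Type*} [CommRing R] [CommRing K] [Algebra R K] [FaithfulSMul R K]

theorem span_singleton_le_of_isUnit_of_algebraMap_eq_mul {a x p c : R} {t : K}
    (hp : algebraMap R K p = algebraMap R K a * t) (hc : algebraMap R K c = algebraMap R K x * t)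
    (hu : IsUnit p) : Ideal.span {x} ≤ Ideal.span {a} := by
  have hxp : x * p = a * c := FaithfulSMul.algebraMap_injective R K <| by
    rw [map_mul, map_mul, hp, hc, mul_left_comm]
  rw [Ideal.span_singleton_le_span_singleton, ← hu.dvd_mul_right, hxp]
  exact dvd_mul_right a c

theorem span_singleton_le_or_le_of_coeIdeal_span_pair_mul_eq_one [IsLocalRing R]
    {S : Submonoid R} [IsLocalization S K] {a x : R} {T : FractionalIdeal S K}
    (hT : (Ideal.span {a, x} : FractionalIdeal S K) * T = 1) :
    Ideal.span {a} ≤ Ideal.span {x} ∨ Ideal.span {x} ≤ Ideal.span {a} := by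
  have integral : ∀ y ∈ Ideal.span {a, x}, ∀ u ∈ T, ∃ c, algebraMap R K c = algebraMap R K y * u :=
    fun y hy u hu ↦ (mem_one_iff S).mp (hT ▸ mul_mem_mul (mem_coeIdeal_of_mem S hy) hu)
  obtain ⟨t, ht, s, hs, hts⟩ := exists_add_eq_of_mem_coeIdeal_span_pair_mul (hT ▸ one_mem_one S)
  have ha : a ∈ Ideal.span {a, x} := Ideal.subset_span (by simp)
  have hx : x ∈ Ideal.span {a, x} := Ideal.subset_span (by simp)
  obtain ⟨p, hp⟩ := integral a ha t ht
  obtain ⟨q, hq⟩ := integral x hx s hs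
  have hpq : p + q = 1 := FaithfulSMul.algebraMap_injective R K <| by
    rw [map_add, map_one, hp, hq, hts]
  rcases IsLocalRing.isUnit_or_isUnit_of_add_one hpq with hu | hu
  · obtain ⟨c, hc⟩ := integral x hx t ht
    exact .inr (span_singleton_le_of_isUnit_of_algebraMap_eq_mul hp hc hu)
  · obtain ⟨d, hd⟩ := integral a ha s hs
    exact .inl (span_singleton_le_of_isUnit_of_algebraMap_eq_mul hq hd hu)

end Comparable

theorem IsLocalRing.add_mul_mem_nonZeroDivisors {R : Type*} [CommRing R] [IsLocalRing R] {a k : R}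
    (ha : a ∈ nonZeroDivisors R) (hk : ¬IsUnit k) : a + a * k ∈ nonZeroDivisors R := by
  have h1k : IsUnit (1 + k) := by
    simpa using IsLocalRing.isUnit_one_sub_self_of_mem_nonunits (-k) (by simpa using hk)
  rw [← mul_one_add a k]
  exact mul_mem ha h1k.mem_nonZeroDivisors

/-- In a local Prüfer ring, if `a` is regular and `(a, x)` is a regular ideal, then `(a)` and
`(x)` are comparable; and if `x = ak` with `k` a non-unit, then `a + x` is regular. -/
theorem comparable_of_local_prufer [IsLocalRing A] (hP : IsPruferRing A) (a x : A)
    (ha : a ∈ nonZeroDivisors A)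
    (hax : ∃ r ∈ Ideal.span ({a, x} : Set A), r ∈ nonZeroDivisors A) :
    (Ideal.span ({a} : Set A) ≤ Ideal.span ({x} : Set A) ∨
      Ideal.span ({x} : Set A) ≤ Ideal.span ({a} : Set A)) ∧
    ∀ k : A, ¬ IsUnit k → x = a * k → a + x ∈ nonZeroDivisors A := by
  obtain ⟨T, hT⟩ := hP _ (Submodule.fg_span (Set.toFinite _)) hax
  refine ⟨span_singleton_le_or_le_of_coeIdeal_span_pair_mul_eq_one hT, ?_⟩
  rintro k hk rfl
  exact IsLocalRing.add_mul_mem_nonZeroDivisors ha hk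
end

section
/- Let B be a local Gaussian ring and I a proper ideal of B. If B ⋈ I is Gaussian, then for all a, b ∈ I (so that (a,0),(0,b) ∈ B ⋈ I) one has ab = 0; hence if I² ≠ 0, then B ⋈ I is not Gaussian. -/
variable {A B : Type*} [CommRing A] [CommRing B]

open Polynomial

lemma coeff_mem_contentIdeal {R : Type*} [CommRing R] (p : Polynomial R) (n : ℕ) :
    p.coeff n ∈ _root_.contentIdeal p := Ideal.subset_span ⟨n, rfl⟩

lemma lemA {R : Type*} [CommRing R] (hg : IsGaussianRing R) (x y : R) (hxy : x * y = 0) :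
    ∃ r : R, x ^ 2 = r * (x ^ 2 + y ^ 2) := by
  set f : Polynomial R := C x * X + C y with hf
  set g : Polynomial R := C y * X + C x with hgdef
  have h1 : x * x ∈ _root_.contentIdeal f * _root_.contentIdeal g := by
    have hx1 : f.coeff 1 = x := by simp [hf]
    have hx0 : g.coeff 0 = x := by simp [hgdef]
    have := Ideal.mul_mem_mul (_root_.coeff_mem_contentIdeal f 1) (_root_.coeff_mem_contentIdeal g 0)
    rwa [hx1, hx0] at this
  rw [← hg f g] at h1
  have hfg : f * g = C (x ^ 2 + y ^ 2) * X := by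
    have : f * g = C (x * y) * X ^ 2 + C (x ^ 2 + y ^ 2) * X + C (x * y) := by
      simp only [hf, hgdef, map_add, map_mul, map_pow]; ring
    rw [this, hxy, map_zero]; ring
  have h2 : _root_.contentIdeal (f * g) ≤ Ideal.span {x ^ 2 + y ^ 2} := by
    rw [hfg]
    refine Ideal.span_le.2 ?_
    rintro _ ⟨n, rfl⟩
    simp only [coeff_C_mul, coeff_X]
    exact Ideal.mem_span_singleton.2 (Dvd.intro _ rfl)
  have h3 := h2 h1
  rw [Ideal.mem_span_singleton] at h3
  obtain ⟨r, hr⟩ := h3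
  exact ⟨r, by linear_combination hr⟩

lemma lemB {R : Type*} [CommRing R] (hg : IsGaussianRing R) (x y : R)
    (hx : x ^ 2 = 0) (hy : y ^ 2 = 0) : x * y = 0 := by
  set f : Polynomial R := C x * X + C y with hf
  set g : Polynomial R := C x * X - C y with hgdef
  have hfg : f * g = 0 := by
    have : f * g = C (x ^ 2) * X ^ 2 - C (y ^ 2) := by
      simp only [hf, hgdef, map_pow]; ring
    simp [this, hx, hy]
  have h1 : x * -y ∈ _root_.contentIdeal f * _root_.contentIdeal g := by
    have hx1 : f.coeff 1 = x := by simp [hf]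
    have hy0 : g.coeff 0 = -y := by simp [hgdef]
    have := Ideal.mul_mem_mul (_root_.coeff_mem_contentIdeal f 1) (_root_.coeff_mem_contentIdeal g 0)
    rwa [hx1, hy0] at this
  rw [← hg f g, hfg] at h1
  have h2 : _root_.contentIdeal (0 : Polynomial R) = ⊥ := by
    refine le_antisymm (Ideal.span_le.2 ?_) bot_le
    rintro _ ⟨n, rfl⟩
    simp
  rw [h2, Ideal.mem_bot] at h1
  linear_combination -h1

/-- If `B` is a local Gaussian ring and `B ⋈ I` is Gaussian, then `ab = 0` for all `a, b ∈ I`;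
hence if `I² ≠ 0`, then `B ⋈ I` is not Gaussian. -/
theorem duplication_not_gaussian [IsLocalRing B] (I : Ideal B) (hI : I ≠ ⊤)
    (hg : IsGaussianRing B) :
    (∀ a ∈ I, ∀ b ∈ I, IsGaussianRing ↥(amalg (RingHom.id B) I) → a * b = 0) ∧
    (I ^ 2 ≠ ⊥ → ¬ IsGaussianRing ↥(amalg (RingHom.id B) I)) := by
  have key : ∀ a ∈ I, ∀ b ∈ I, IsGaussianRing ↥(amalg (RingHom.id B) I) → a * b = 0 := by
    intro a ha b hb hG
    -- Step 1: every element of I squares to zero.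
    have hsq : ∀ c ∈ I, c * c = 0 := by
      intro c hc
      set x : ↥(amalg (RingHom.id B) I) :=
        ⟨(c, 0), c, -c, I.neg_mem hc, by simp⟩ with hxdef
      set y : ↥(amalg (RingHom.id B) I) :=
        ⟨(0, c), 0, c, hc, by simp⟩ with hydef
      have hxy : x * y = 0 := by
        apply Subtype.ext
        show ((c, 0) : B × B) * (0, c) = 0
        simp [Prod.ext_iff]
      obtain ⟨r, hr⟩ := lemA hG x y hxy
      obtain ⟨r1, j, hj, hrval⟩ := r.2
      have hval : ((c, 0) : B × B) ^ 2 = (r1, r1 + j) * (((c, 0) : B × B) ^ 2 + ((0, c) : B × B) ^ 2) := by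
        have := congrArg (Subtype.val) hr
        push_cast at this
        rw [hrval] at this
        simpa [hxdef, hydef] using this
      simp only [Prod.pow_mk, Prod.mk_add_mk, Prod.mk_mul_mk, Prod.mk.injEq] at hval
      obtain ⟨h1, h2⟩ := hval
      have hjm : j ∈ IsLocalRing.maximalIdeal B := IsLocalRing.le_maximalIdeal hI hj
      have hunit : IsUnit ((1 : B) + j) := by
        by_contra hnu
        have h1m : (1 : B) + j ∈ IsLocalRing.maximalIdeal B := hnu
        have hone : (1 : B) ∈ IsLocalRing.maximalIdeal B := by
          have := (IsLocalRing.maximalIdeal B).sub_mem h1m hjm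
          simpa using this
        exact (IsLocalRing.maximalIdeal.isMaximal B).ne_top ((Ideal.eq_top_iff_one _).2 hone)
      have hcomb : ((1 : B) + j) * (c * c) = 0 := by linear_combination h1 - h2
      exact hunit.mul_right_eq_zero.mp hcomb
    -- Step 2: ab = 0
    set x : ↥(amalg (RingHom.id B) I) := ⟨(a, 0), a, -a, I.neg_mem ha, by simp⟩ with hxdef
    set y : ↥(amalg (RingHom.id B) I) := ⟨(b, 0), b, -b, I.neg_mem hb, by simp⟩ with hydef
    have hx2 : x ^ 2 = 0 := by
      apply Subtype.ext
      show ((a, 0) : B × B) ^ 2 = 0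
      simp [Prod.ext_iff, pow_two, hsq a ha]
    have hy2 : y ^ 2 = 0 := by
      apply Subtype.ext
      show ((b, 0) : B × B) ^ 2 = 0
      simp [Prod.ext_iff, pow_two, hsq b hb]
    have := lemB hG x y hx2 hy2
    have hv := congrArg (Subtype.val) this
    push_cast at hv
    simpa [hxdef, hydef, Prod.ext_iff] using hv
  refine ⟨key, fun hI2 hG => hI2 ?_⟩
  rw [pow_two, eq_bot_iff]
  exact Ideal.mul_le.2 fun r hr s hs => Ideal.mem_bot.2 (key r hr s hs hG)
end

section
/- There exists a ring of the form A ⋈^f J that is a Prüfer ring but not a Gaussian ring: with B := ℤ/8ℤ, I := 2ℤ/8ℤ, A := B ⋈ I, f : A → B the natural surjection (a, a+i) ↦ a, and J := I, the ring A ⋈^f J is Prüfer but not Gaussian. -/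
variable {A B : Type*} [CommRing A] [CommRing B]

/-- The ideal `2ℤ/8ℤ` of `ℤ/8ℤ`. -/
def I8 : Ideal (ZMod 8) := Ideal.span {(2 : ZMod 8)}

/-- `A := (ℤ/8ℤ) ⋈ I8`, the amalgamated duplication. -/
def A8 : Subring (ZMod 8 × ZMod 8) := amalg (RingHom.id (ZMod 8)) I8

/-- The natural surjection `A8 → ℤ/8ℤ`, `(a, a+i) ↦ a`. -/
def f8 : ↥A8 →+* ZMod 8 := (RingHom.fst (ZMod 8) (ZMod 8)).comp A8.subtype

/-!
A finite ring is its own total ring of quotients, so a regular ideal contains a unit and is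
trivially invertible: every finite ring is Prüfer.

For Gaussianness, `u = ((0, 0), 2)` and `v = ((0, 2), 0)` satisfy `u v = 0`, so
`(u + v X)(v + u X) = (u² + v²) X` and `u²` lies in `c(u + v X) c(v + u X)`. But
`u² + v² = ((0, 4), 4)` and `4` kills the difference of the last two coordinates of any element,
so every multiple of `u² + v²` has equal last two coordinates, whereas `u² = ((0, 0), 4)` does not.
-/

open Polynomial hiding contentIdeal coeff_mem_contentIdeal

theorem isPruferRing_of_forall_isUnit {R : Type*} [CommRing R]
    (h : ∀ r ∈ nonZeroDivisors R, IsUnit r) : IsPruferRing R := by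
  rintro I - ⟨r, hrI, hr⟩
  refine ⟨1, ?_⟩
  rw [Ideal.eq_top_of_isUnit_mem I hrI (h r hr), mul_one, FractionalIdeal.coeIdeal_top]

theorem isPruferRing_of_finite (R : Type*) [CommRing R] [Finite R] : IsPruferRing R :=
  isPruferRing_of_forall_isUnit fun _ ↦ isUnit_iff_mem_nonZeroDivisors_of_finite.mpr

section Gaussian

variable {R : Type*} [CommRing R]

theorem coeff_mem_contentIdeal_s17 (p : R[X]) (n : ℕ) : p.coeff n ∈ contentIdeal p :=
  Ideal.subset_span ⟨n, rfl⟩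

theorem contentIdeal_C_mul_X_le (w : R) : contentIdeal (C w * X) ≤ Ideal.span {w} := by
  refine Ideal.span_le.mpr ?_
  rintro _ ⟨n, rfl⟩
  rw [coeff_C_mul_X]
  split_ifs
  · exact Ideal.mem_span_singleton_self w
  · exact Ideal.zero_mem _

theorem not_isGaussianRing_of_mul_eq_zero {u v : R} (huv : u * v = 0)
    (hu : u * u ∉ Ideal.span {u * u + v * v}) : ¬ IsGaussianRing R := by
  intro hR
  set p : R[X] := C u + C v * X
  set q : R[X] := C v + C u * X
  have hpq : p * q = C (u * u + v * v) * X := by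
    have : p * q = C (u * v) + C (u * u + v * v) * X + C (u * v) * X ^ 2 := by
      simp only [p, q, C_add, C_mul]
      ring
    rw [this, huv, C_0, zero_mul, zero_add, add_zero]
  have hmem : u * u ∈ contentIdeal p * contentIdeal q := by
    refine Ideal.mul_mem_mul ?_ ?_
    · simpa [p] using coeff_mem_contentIdeal_s17 p 0
    · simpa [q] using coeff_mem_contentIdeal_s17 q 1
  rw [← hR, hpq] at hmem
  exact hu (contentIdeal_C_mul_X_le _ hmem)

end Gaussian

theorem amalg.snd_sub_mem {f : A →+* B} {J : Ideal B} (x : amalg f J) :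
    (x : A × B).2 - f (x : A × B).1 ∈ J := by
  obtain ⟨a, j, hj, hx⟩ := x.2
  simpa [hx] using hj

def amalg.mk (f : A →+* B) {J : Ideal B} (a : A) (j : B) (hj : j ∈ J) : amalg f J :=
  ⟨(a, f a + j), a, j, hj, rfl⟩

theorem two_mem_I8 : (2 : ZMod 8) ∈ I8 := Ideal.mem_span_singleton_self 2

theorem four_mul_of_mem_I8 {i : ZMod 8} (hi : i ∈ I8) : 4 * i = 0 := by
  obtain ⟨c, rfl⟩ := Ideal.mem_span_singleton'.mp hi
  exact (by decide : ∀ c : ZMod 8, 4 * (c * 2) = 0) c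

/-- An element `((a, a + i), a + j)` of `A8 ⋈^{f8} I8` has last two coordinates differing by
`i - j ∈ I8`, which `4` annihilates. -/
theorem four_mul_snd_eq (x : amalg f8 I8) :
    4 * ((x : A8 × ZMod 8).1 : ZMod 8 × ZMod 8).2 = 4 * (x : A8 × ZMod 8).2 := by
  have h := I8.sub_mem (amalg.snd_sub_mem (x : A8 × ZMod 8).1) (amalg.snd_sub_mem x)
  rw [← sub_eq_zero, ← mul_sub, ← four_mul_of_mem_I8 h]
  congr 1
  simp only [f8, RingHom.coe_comp, Function.comp_apply, RingHom.id_apply, RingHom.coe_fst,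
    Subring.coe_subtype]
  ring

def u8 : amalg f8 I8 := amalg.mk f8 0 2 two_mem_I8

def v8 : amalg f8 I8 := amalg.mk f8 (amalg.mk (RingHom.id _) 0 2 two_mem_I8) 0 I8.zero_mem

theorem u8_mul_v8 : u8 * v8 = 0 := by decide

theorem u8_mul_self_notMem_span : u8 * u8 ∉ Ideal.span {u8 * u8 + v8 * v8} := by
  intro h
  obtain ⟨r, hr⟩ := Ideal.mem_span_singleton'.mp h
  have hmid := congrArg (fun x : amalg f8 I8 => ((x : A8 × ZMod 8).1 : ZMod 8 × ZMod 8).2) hr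
  have hlast := congrArg (fun x : amalg f8 I8 => (x : A8 × ZMod 8).2) hr
  simp only [Subring.coe_mul, Subring.coe_add, Prod.snd_mul, Prod.snd_add, Prod.fst_mul,
    Prod.fst_add] at hmid hlast
  have hu2 : ((u8 : A8 × ZMod 8).1 : ZMod 8 × ZMod 8).2 = 0 := rfl
  have hv2 : ((v8 : A8 × ZMod 8).1 : ZMod 8 × ZMod 8).2 = 2 := rfl
  have hu3 : (u8 : A8 × ZMod 8).2 = 2 := rfl
  have hv3 : (v8 : A8 × ZMod 8).2 = 0 := rfl
  rw [hu2, hv2] at hmid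
  rw [hu3, hv3] at hlast
  have h4 : (4 : ZMod 8) = 0 := by linear_combination hmid - hlast - four_mul_snd_eq r
  exact absurd h4 (by decide)

/-- `A8 ⋈^{f8} I8` is a Prüfer ring which is not Gaussian. -/
theorem example_prufer_not_gaussian :
    IsPruferRing ↥(amalg f8 I8) ∧ ¬ IsGaussianRing ↥(amalg f8 I8) :=
  ⟨isPruferRing_of_finite _, not_isGaussianRing_of_mul_eq_zero u8_mul_v8 u8_mul_self_notMem_span⟩
end
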